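/- arXiv:1812.09322 — 5 statements merged into one kernel-verified Lean document; each statement's English description precedes it below -/
import Mathlib

section
/- Let K be a kernel on ℝ^d satisfying (K0)–(K2), and assume μ₄ > μ₂₂ > 0 (which holds automatically for such kernels when d ≥ 2). Then η := μ₄ + (d−1)μ₂₂ − d satisfies d·η = ∫ K(z)(‖z‖² − d)² dz > 0, and the linear operator J : H → H is bijective with inverse J^{−1}(c,b,A) = ( c − η^{−1} tr(A_o), b, (A_o − (μ₂₂ − 1) η^{−1} tr(A_o) I_d) ⊘ M ), where A_o := A − c I_d and ⊘ denotes entrywise division. -/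
open MeasureTheory Filter Topology

noncomputable section

/-- `ℝ^d` as a pi type; `volume` is `d`-dimensional Lebesgue measure. -/
abbrev Vec (d : ℕ) := Fin d → ℝ

/-- The Euclidean norm on `ℝ^d`. -/
def euclNorm {d : ℕ} (z : Vec d) : ℝ := Real.sqrt (∑ i, z i ^ 2)

/-- The space `H = ℝ × ℝ^d × ℝ^{d×d}` (symmetric matrices sit inside the third factor). -/
abbrev Htriple (d : ℕ) := ℝ × Vec d × (Fin d → Fin d → ℝ)

/-- The matrix `M` with `M_jj = (μ₄ - μ₂₂)/2`, `M_jk = μ₂₂` for `j ≠ k`. -/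
def Mmat (d : ℕ) (μ4 μ22 : ℝ) : Fin d → Fin d → ℝ :=
  fun j k => if j = k then (μ4 - μ22) / 2 else μ22

/-- The linear operator `J(c,b,A) = (c + tr A/2, b, c I + A ⊙ M + (μ₂₂/2) tr A · I)`. -/
def Jop {d : ℕ} (μ4 μ22 : ℝ) (v : Htriple d) : Htriple d :=
  (v.1 + (∑ i, v.2.2 i i) / 2, v.2.1,
    fun j k => (if j = k then v.1 else 0) + v.2.2 j k * Mmat d μ4 μ22 j k +
      (if j = k then μ22 / 2 * ∑ i, v.2.2 i i else 0))

/-- The claimed inverse `J⁻¹(c,b,A) = (c - η⁻¹ tr A₀, b, (A₀ - (μ₂₂-1) η⁻¹ tr A₀ · I) ⊘ M)`,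
where `A₀ = A - c I` and `⊘` is entrywise division. -/
def Jinv {d : ℕ} (μ4 μ22 η : ℝ) (v : Htriple d) : Htriple d :=
  (v.1 - η⁻¹ * ∑ i, (v.2.2 i i - v.1), v.2.1,
    fun j k =>
      ((v.2.2 j k - if j = k then v.1 else 0) -
        (if j = k then (μ22 - 1) * η⁻¹ * ∑ i, (v.2.2 i i - v.1) else 0)) /
      Mmat d μ4 μ22 j k)

/-! Expanding `(‖z‖² - d)²` and inserting the second and fourth moments of `K` gives `d η`.
This integral is positive: its integrand is nonnegative, and since the sphere `‖z‖² = d` is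
Lebesgue-null it could vanish almost everywhere only if `K` did, contradicting `∫ K = 1`.
For `J`, the trace of `A - c I` in `J(c, b, A)` equals `η tr(A) / 2`; so `η ≠ 0` lets one
recover `tr A`, hence `c`, from `J(c, b, A)`, and the nonvanishing entries of `M` then give `A`. -/

lemma euclNorm_sq {d : ℕ} (z : Vec d) : euclNorm z ^ 2 = ∑ i, z i ^ 2 :=
  Real.sq_sqrt (by positivity)

lemma euclNorm_rpow_two_mul {d : ℕ} (z : Vec d) (n : ℕ) :
    euclNorm z ^ (2 * n : ℝ) = (∑ i, z i ^ 2) ^ n := by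
  rw [← euclNorm_sq, ← pow_mul, ← Real.rpow_natCast]
  push_cast
  rfl

lemma volume_euclNorm_eq {d : ℕ} [NeZero d] (s : ℝ) :
    volume {z : Vec d | euclNorm z = s} = 0 := by
  rw [← (EuclideanSpace.volume_preserving_symm_measurableEquiv_toLp
      (Fin d)).measure_preimage_equiv,
    ← Measure.addHaar_sphere volume (0 : EuclideanSpace ℝ (Fin d)) s]
  congr 1
  ext x
  simp [euclNorm, EuclideanSpace.norm_eq]

lemma ae_euclNorm_sq_ne {d : ℕ} [NeZero d] (c : ℝ) :
    ∀ᵐ z : Vec d, euclNorm z ^ 2 ≠ c := by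
  filter_upwards [measure_eq_zero_iff_ae_notMem.mp (volume_euclNorm_eq (√c))] with z hz hzc
  exact hz (by rw [← hzc]; exact (Real.sqrt_sq (Real.sqrt_nonneg _)).symm)

section

variable {α : Type*} {K f g : α → ℝ}

lemma mul_sub_sq_eq (c : ℝ) : (fun x => K x * (g x - c) ^ 2) =
    fun x => K x * g x ^ 2 - 2 * c * (K x * g x) + c ^ 2 * K x := by
  funext x
  ring

variable [MeasurableSpace α] {μ : Measure α}

lemma MeasureTheory.Integrable.mul_of_abs_le (hg : Integrable (fun x => K x * g x) μ)
    (hK : AEStronglyMeasurable K μ) (hf : AEStronglyMeasurable f μ) (hKpos : ∀ x, 0 ≤ K x)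
    (hfg : ∀ x, |f x| ≤ g x) : Integrable (fun x => K x * f x) μ :=
  hg.mono (hK.mul hf) <| ae_of_all _ fun x => by
    rw [Real.norm_eq_abs, Real.norm_eq_abs, abs_mul, abs_of_nonneg (hKpos x)]
    exact (mul_le_mul_of_nonneg_left (hfg x) (hKpos x)).trans (le_abs_self _)

lemma integral_mul_pos_of_ae_ne_zero (hKpos : ∀ x, 0 ≤ K x) (hfpos : ∀ x, 0 ≤ f x)
    (hf : ∀ᵐ x ∂μ, f x ≠ 0) (hKf : Integrable (fun x => K x * f x) μ)
    (hK : ∫ x, K x ∂μ ≠ 0) : 0 < ∫ x, K x * f x ∂μ := by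
  refine (integral_nonneg fun x => mul_nonneg (hKpos x) (hfpos x)).lt_of_ne fun h => hK ?_
  have hKf0 : (fun x => K x * f x) =ᵐ[μ] 0 :=
    (integral_eq_zero_iff_of_nonneg (fun x => mul_nonneg (hKpos x) (hfpos x)) hKf).mp h.symm
  have hK0 : K =ᵐ[μ] 0 := by
    filter_upwards [hKf0, hf] with x hx hfx
    exact (mul_eq_zero.mp hx).resolve_right hfx
  simp [integral_congr_ae hK0]

variable (c : ℝ) (hK : Integrable K μ) (hg : Integrable (fun x => K x * g x) μ)
  (hg2 : Integrable (fun x => K x * g x ^ 2) μ)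
include hK hg hg2

lemma integrable_mul_sub_sq : Integrable (fun x => K x * (g x - c) ^ 2) μ := by
  rw [mul_sub_sq_eq]
  exact (hg2.sub (hg.const_mul _)).add (hK.const_mul _)

lemma integral_mul_sub_sq :
    ∫ x, K x * (g x - c) ^ 2 ∂μ =
      ∫ x, K x * g x ^ 2 ∂μ - 2 * c * ∫ x, K x * g x ∂μ + c ^ 2 * ∫ x, K x ∂μ := by
  rw [mul_sub_sq_eq, integral_add, integral_sub, integral_const_mul, integral_const_mul]
  exacts [hg2, hg.const_mul _, hg2.sub (hg.const_mul _), hK.const_mul _]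

end

lemma sum_sum_ite_eq {ι : Type*} [Fintype ι] [DecidableEq ι] (a b : ℝ) :
    ∑ i : ι, ∑ j : ι, (if i = j then a else b) =
      Fintype.card ι * a + Fintype.card ι * (Fintype.card ι - 1) * b := by
  have hrow : ∀ i : ι, ∑ j : ι, (if i = j then a else b) = a + (Fintype.card ι - 1) * b := by
    intro i
    rw [← Finset.add_sum_erase _ _ (Finset.mem_univ i), if_pos rfl,
      Finset.sum_congr rfl fun j hj => if_neg (Finset.ne_of_mem_erase hj).symm,
      Finset.sum_const, Finset.card_erase_of_mem (Finset.mem_univ i), Finset.card_univ,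
      nsmul_eq_mul, Nat.cast_pred (Fintype.card_pos_iff.mpr ⟨i⟩)]
  simp only [hrow, Finset.sum_const, Finset.card_univ, nsmul_eq_mul]
  ring

section Moments

variable {d : ℕ} {K : Vec d → ℝ}

lemma integrable_mul_sumSq_pow
    (hKmom : ∀ r : ℝ, 0 < r → Integrable (fun z => K z * euclNorm z ^ r))
    {n : ℕ} (hn : 0 < n) : Integrable (fun z : Vec d => K z * (∑ i, z i ^ 2) ^ n) := by
  simpa only [euclNorm_rpow_two_mul] using hKmom (2 * n) (by positivity)

lemma integrable_mul_sq_apply (hK : AEStronglyMeasurable K) (hKpos : ∀ z, 0 ≤ K z)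
    (h2 : Integrable (fun z : Vec d => K z * ∑ i, z i ^ 2)) (i : Fin d) :
    Integrable (fun z : Vec d => K z * z i ^ 2) :=
  h2.mul_of_abs_le hK ((continuous_apply i).pow 2).aestronglyMeasurable hKpos fun z => by
    rw [abs_of_nonneg (sq_nonneg _)]
    exact Finset.single_le_sum (fun k _ => sq_nonneg (z k)) (Finset.mem_univ i)

lemma integrable_mul_sq_mul_sq_apply (hK : AEStronglyMeasurable K) (hKpos : ∀ z, 0 ≤ K z)
    (h4 : Integrable (fun z : Vec d => K z * (∑ i, z i ^ 2) ^ 2)) (i j : Fin d) :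
    Integrable (fun z : Vec d => K z * (z i ^ 2 * z j ^ 2)) :=
  h4.mul_of_abs_le hK
    (((continuous_apply i).pow 2).mul ((continuous_apply j).pow 2)).aestronglyMeasurable hKpos
    fun z => by
    have hle : ∀ k, z k ^ 2 ≤ ∑ l, z l ^ 2 := fun k =>
      Finset.single_le_sum (fun l _ => sq_nonneg (z l)) (Finset.mem_univ k)
    rw [abs_of_nonneg (by positivity), sq (∑ l, z l ^ 2)]
    exact mul_le_mul (hle i) (hle j) (sq_nonneg _) (by positivity)

lemma integral_mul_sumSq (hint : ∀ i, Integrable (fun z : Vec d => K z * z i ^ 2))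
    (hK2 : ∀ i, ∫ z, K z * z i * z i = 1) :
    ∫ z, K z * ∑ i, z i ^ 2 = d := by
  simp_rw [Finset.mul_sum]
  rw [integral_finsetSum _ fun i _ => hint i]
  simp [sq, ← mul_assoc, hK2]

lemma integral_mul_sumSq_sq {μ4 μ22 : ℝ}
    (hint : ∀ i j, Integrable (fun z : Vec d => K z * (z i ^ 2 * z j ^ 2)))
    (hμ4 : ∀ i, μ4 = ∫ z, K z * z i ^ 4)
    (hμ22 : ∀ i j, i ≠ j → μ22 = ∫ z, K z * z i ^ 2 * z j ^ 2) :
    ∫ z, K z * (∑ i, z i ^ 2) ^ 2 = d * μ4 + d * (d - 1) * μ22 := by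
  have hval : ∀ i j, ∫ z, K z * (z i ^ 2 * z j ^ 2) = if i = j then μ4 else μ22 := by
    intro i j
    split_ifs with h
    · subst h
      simp only [hμ4 i, ← pow_add]
    · simp only [hμ22 i j h, mul_assoc]
  have hexp : (fun z : Vec d => K z * (∑ i, z i ^ 2) ^ 2) =
      fun z => ∑ i, ∑ j, K z * (z i ^ 2 * z j ^ 2) := by
    funext z
    simp_rw [sq (∑ i, z i ^ 2), Finset.sum_mul_sum, Finset.mul_sum]
  rw [hexp, integral_finsetSum _ fun i _ => integrable_finsetSum _ fun j _ => hint i j]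
  simp_rw [integral_finsetSum _ fun j _ => hint _ j, hval]
  rw [sum_sum_ite_eq, Fintype.card_fin]

end Moments

section Inverse

variable {d : ℕ} {μ4 μ22 η : ℝ}

lemma sum_diag_sub_jop (v : Htriple d) :
    ∑ i, ((Jop μ4 μ22 v).2.2 i i - (Jop μ4 μ22 v).1) =
      (μ4 + (d - 1) * μ22 - d) * (∑ i, v.2.2 i i) / 2 := by
  obtain ⟨c, b, A⟩ := v
  have hterm : ∀ i, (Jop μ4 μ22 (c, b, A)).2.2 i i - (Jop μ4 μ22 (c, b, A)).1 =
      (μ4 - μ22) / 2 * A i i + (μ22 - 1) / 2 * ∑ k, A k k := fun i => by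
    simp only [Jop, Mmat, ↓reduceIte]
    ring
  rw [Finset.sum_congr rfl fun i _ => hterm i, Finset.sum_add_distrib, ← Finset.mul_sum,
    Finset.sum_const, Finset.card_univ, Fintype.card_fin, nsmul_eq_mul]
  ring

lemma sum_diag_jinv (hη : η = μ4 + (d - 1) * μ22 - d) (hη0 : η ≠ 0) (hμ : μ4 ≠ μ22)
    (v : Htriple d) :
    ∑ i, (Jinv μ4 μ22 η v).2.2 i i = 2 * (∑ i, (v.2.2 i i - v.1)) / η := by
  obtain ⟨c, b, A⟩ := v
  have hμ' : μ4 - μ22 ≠ 0 := sub_ne_zero.mpr hμ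
  have hterm : ∀ i, (Jinv μ4 μ22 η (c, b, A)).2.2 i i =
      2 / (μ4 - μ22) * (A i i - c) -
        2 * (μ22 - 1) / (η * (μ4 - μ22)) * ∑ k, (A k k - c) := fun i => by
    simp only [Jinv, Mmat, ↓reduceIte]
    field_simp
  rw [Finset.sum_congr rfl fun i _ => hterm i, Finset.sum_sub_distrib, ← Finset.mul_sum,
    Finset.sum_const, Finset.card_univ, Fintype.card_fin, nsmul_eq_mul]
  field_simp
  rw [hη]
  ring

lemma jinv_jop (hη : η = μ4 + (d - 1) * μ22 - d) (hη0 : η ≠ 0) (hμ : μ4 ≠ μ22)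
    (hμ22 : μ22 ≠ 0) (v : Htriple d) : Jinv μ4 μ22 η (Jop μ4 μ22 v) = v := by
  rw [Jinv, sum_diag_sub_jop, ← hη]
  obtain ⟨c, b, A⟩ := v
  have hμ' : (μ4 - μ22) / 2 ≠ 0 := div_ne_zero (sub_ne_zero.mpr hμ) two_ne_zero
  simp only [Jop, Mmat, Prod.mk.injEq]
  refine ⟨by field_simp; ring, trivial, funext fun j => funext fun k => ?_⟩
  by_cases h : j = k
  · subst h
    simp only [↓reduceIte]
    field_simp
    ring
  · simp only [if_neg h]
    field_simp
    ring

lemma jop_jinv (hη : η = μ4 + (d - 1) * μ22 - d) (hη0 : η ≠ 0) (hμ : μ4 ≠ μ22)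
    (hμ22 : μ22 ≠ 0) (v : Htriple d) : Jop μ4 μ22 (Jinv μ4 μ22 η v) = v := by
  rw [Jop, sum_diag_jinv hη hη0 hμ]
  obtain ⟨c, b, A⟩ := v
  have hμ' : (μ4 - μ22) / 2 ≠ 0 := div_ne_zero (sub_ne_zero.mpr hμ) two_ne_zero
  simp only [Jinv, Mmat, Prod.mk.injEq]
  refine ⟨by field_simp; ring, trivial, funext fun j => funext fun k => ?_⟩
  by_cases h : j = k
  · subst h
    simp only [↓reduceIte]
    field_simp
    ring
  · simp only [if_neg h]
    field_simp
    ring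

end Inverse

theorem statement2_general {d : ℕ} (hd : 1 ≤ d)
    (K : Vec d → ℝ) (hKpos : ∀ z, 0 ≤ K z)
    (hKmom : ∀ r : ℝ, 0 < r → Integrable (fun z => K z * euclNorm z ^ r))
    (hK0 : (∫ z : Vec d, K z) = 1)
    (hK2 : ∀ i j : Fin d, (∫ z : Vec d, K z * z i * z j) = if i = j then 1 else 0)
    (μ4 μ22 : ℝ)
    (hμ4 : ∀ i : Fin d, μ4 = ∫ z : Vec d, K z * z i ^ 4)
    (hμ22 : ∀ i j : Fin d, i ≠ j → μ22 = ∫ z : Vec d, K z * z i ^ 2 * z j ^ 2)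
    (hμgt : μ22 < μ4) (hμpos : 0 < μ22)
    (η : ℝ) (hη : η = μ4 + (d - 1) * μ22 - d) :
    ((d : ℝ) * η = ∫ z : Vec d, K z * (euclNorm z ^ 2 - d) ^ 2) ∧
      (0 < (d : ℝ) * η) ∧
      Function.Bijective (Jop μ4 μ22 : Htriple d → Htriple d) ∧
      Function.LeftInverse (Jinv μ4 μ22 η : Htriple d → Htriple d) (Jop μ4 μ22) ∧
      Function.RightInverse (Jinv μ4 μ22 η : Htriple d → Htriple d) (Jop μ4 μ22) := by
  have : NeZero d := ⟨by omega⟩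
  have hK0' : ∫ z : Vec d, K z ≠ 0 := by rw [hK0]; exact one_ne_zero
  have hK : Integrable K := Integrable.of_integral_ne_zero hK0'
  have h2 : Integrable fun z : Vec d => K z * ∑ i, z i ^ 2 := by
    simpa only [pow_one] using integrable_mul_sumSq_pow hKmom one_pos
  have h4 := integrable_mul_sumSq_pow hKmom two_pos
  have hvar : ∫ z : Vec d, K z * (euclNorm z ^ 2 - d) ^ 2 = d * η := by
    simp_rw [euclNorm_sq]
    rw [integral_mul_sub_sq _ hK h2 h4,
      integral_mul_sumSq_sq (integrable_mul_sq_mul_sq_apply hK.1 hKpos h4) hμ4 hμ22,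
      integral_mul_sumSq (integrable_mul_sq_apply hK.1 hKpos h2) (fun i => by simp [hK2]),
      hK0, hη]
    ring
  have hpos : 0 < (d : ℝ) * η := by
    rw [← hvar]
    refine integral_mul_pos_of_ae_ne_zero hKpos (fun z => sq_nonneg _) ?_ ?_ hK0'
    · filter_upwards [ae_euclNorm_sq_ne (d : ℝ)] with z hz
      exact pow_ne_zero 2 (sub_ne_zero.mpr hz)
    · simp_rw [euclNorm_sq]
      exact integrable_mul_sub_sq _ hK h2 h4
  have hη0 : η ≠ 0 := right_ne_zero_of_mul hpos.ne'
  have hleft : Function.LeftInverse (Jinv μ4 μ22 η : Htriple d → Htriple d) (Jop μ4 μ22) :=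
    jinv_jop hη hη0 hμgt.ne' hμpos.ne'
  have hright : Function.RightInverse (Jinv μ4 μ22 η : Htriple d → Htriple d) (Jop μ4 μ22) :=
    jop_jinv hη hη0 hμgt.ne' hμpos.ne'
  exact ⟨hvar.symm, hpos, ⟨hleft.injective, hright.surjective⟩, hleft, hright⟩

/-- `d·η = ∫ K(z)(‖z‖²-d)² dz > 0`, and `J` is bijective with the
explicit inverse `Jinv`. -/
theorem statement2 {d : ℕ} (hd : 1 ≤ d)
    (K : Vec d → ℝ) (hKmeas : Measurable K) (hKpos : ∀ z, 0 ≤ K z)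
    (hKbd : ∃ C : ℝ, ∀ z, K z ≤ C)
    (hKmom : ∀ r : ℝ, 0 < r → Integrable (fun z => K z * euclNorm z ^ r))
    (hK0 : (∫ z : Vec d, K z) = 1)
    (hK1 : ∀ (ξ : Vec d), (∀ i, ξ i = 1 ∨ ξ i = -1) → ∀ (σ : Equiv.Perm (Fin d)),
      ∀ z : Vec d, K z = K fun i => ξ i * z (σ i))
    (hK2 : ∀ i j : Fin d, (∫ z : Vec d, K z * z i * z j) = if i = j then 1 else 0)
    (μ4 μ22 : ℝ)
    (hμ4 : ∀ i : Fin d, μ4 = ∫ z : Vec d, K z * z i ^ 4)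
    (hμ22 : ∀ i j : Fin d, i ≠ j → μ22 = ∫ z : Vec d, K z * z i ^ 2 * z j ^ 2)
    (hμ22' : d = 1 → μ22 = 1)
    (hμgt : μ22 < μ4) (hμpos : 0 < μ22)
    (η : ℝ) (hη : η = μ4 + (d - 1) * μ22 - d) :
    ((d : ℝ) * η = ∫ z : Vec d, K z * (euclNorm z ^ 2 - d) ^ 2) ∧
      (0 < (d : ℝ) * η) ∧
      Function.Bijective (Jop μ4 μ22 : Htriple d → Htriple d) ∧
      Function.LeftInverse (Jinv μ4 μ22 η : Htriple d → Htriple d) (Jop μ4 μ22) ∧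
      Function.RightInverse (Jinv μ4 μ22 η : Htriple d → Htriple d) (Jop μ4 μ22) :=
  statement2_general hd K hKpos hKmom hK0 hK2 μ4 μ22 hμ4 hμ22 hμgt hμpos η hη
end
end

section
/- Let W be a set of bounded nonnegative measurable weight functions on ℝ^d, G a set of nonnegative continuous functions on ℝ^d, and P a set of probability densities on ℝ^d with ∫ w(y) p(y) dy > 0 for all w ∈ W, p ∈ P. For w ∈ W set G_w := {g ∈ G : 0 < ∫ w(z) g(z) dz < ∞} and, for g ∈ G_w, g_w := w·g / ∫ w(z) g(z) dz; assume g_w ∈ P for all w ∈ W and g ∈ G_w. Let S : P × ℝ^d → ℝ ∪ {∞} be a proper scoring rule with respect to P. Define S̃(g, y, w) := w(y) S(g_w, y) if g ∈ G_w and S̃(g, y, w) := ∞ otherwise. Then: (i) S̃ is localizing: if g, h ∈ G agree on {w > 0}, then S̃(g, ·, w) = S̃(h, ·, w) almost everywhere; (ii) S̃ is locally proper with respect to (G, P): for every w ∈ W, p ∈ P, every g ∈ G with g = p on {w > 0}, and every h ∈ G, one has ∫ S̃(g, y, w) p(y) dy ≤ ∫ S̃(h, y, w) p(y) dy; (iii)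 if S is strictly proper with respect to P, then S̃ is proportionally locally proper: for every w ∈ W, p ∈ P, every g ∈ G with g ∝ p on {w > 0}, and every h ∈ G, ∫ S̃(g, y, w) p(y) dy ≤ ∫ S̃(h, y, w) p(y) dy, with equality if and only if h ∝ p on {w > 0}. -/
open MeasureTheory Filter Topology
open scoped EReal Classical

noncomputable section

/-- `G_w = {g ∈ G : 0 < ∫ w g < ∞}`. -/
def Gset {d : ℕ} (G : Set (Vec d → ℝ)) (w : Vec d → ℝ) : Set (Vec d → ℝ) :=
  {g ∈ G | Integrable (fun y => w y * g y) ∧ 0 < ∫ y : Vec d, w y * g y}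

/-- The normalized density `g_w = w g / ∫ w g`. -/
noncomputable def nrm {d : ℕ} (w g : Vec d → ℝ) : Vec d → ℝ :=
  fun y => w y * g y / ∫ y' : Vec d, w y' * g y'

/-- The pointwise weighted score `S̃(g, y, w)`, equal to `w(y) S(g_w, y)` if `g ∈ G_w`
and `∞` otherwise. -/
noncomputable def wScore {d : ℕ} (S : (Vec d → ℝ) → Vec d → ℝ) (G : Set (Vec d → ℝ))
    (g : Vec d → ℝ) (y : Vec d) (w : Vec d → ℝ) : EReal :=
  if g ∈ Gset G w then ((w y * S (nrm w g) y : ℝ) : EReal) else ⊤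

/-- The expected weighted score `S̃(g, p, w) = ∫ S̃(g, y, w) p(y) dy`. -/
noncomputable def wExpScore {d : ℕ} (S : (Vec d → ℝ) → Vec d → ℝ) (G : Set (Vec d → ℝ))
    (g p w : Vec d → ℝ) : EReal :=
  if g ∈ Gset G w then ((∫ y : Vec d, w y * S (nrm w g) y * p y : ℝ) : EReal) else ⊤

/-!
Only `w g` enters `S̃(g, ·, w)`, and `w g = w h` as soon as `g = h` on `{w > 0}`; this gives
localization. If `g ∝ p` on `{w > 0}` then `g ∈ G_w` and `g_w = p_w := w p / ∫ w p`, and for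
every `h ∈ G_w` the expected weighted score is `(∫ w p) · ∫ S(h_w, y) p_w(y) dy`. Local
properness is therefore properness of `S` at `p_w ∈ P`; under strict propriety equality forces
`h_w = p_w`, i.e. `h ∝ p` on `{w > 0}`. Members of `G \ G_w` score `∞`.
-/

theorem mul_eq_mul_of_eqOn_pos {α : Type*} {w g h : α → ℝ} (hw : ∀ y, 0 ≤ w y)
    (hgh : Set.EqOn g h {y | 0 < w y}) : (fun y => w y * g y) = fun y => w y * h y := by
  funext y
  rcases (hw y).eq_or_lt with h0 | h0
  · rw [← h0, zero_mul, zero_mul]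
  · rw [hgh h0]

section Localization

variable {d : ℕ} {S : (Vec d → ℝ) → Vec d → ℝ} {G P : Set (Vec d → ℝ)}
  {w p g h : Vec d → ℝ}

theorem nrm_congr (hgh : (fun y => w y * g y) = fun y => w y * h y) : nrm w g = nrm w h := by
  funext y
  have hy := congrFun hgh y
  simp only [nrm] at hy ⊢
  rw [hy, hgh]

theorem mem_Gset_congr (hg : g ∈ G) (hh : h ∈ G)
    (hgh : (fun y => w y * g y) = fun y => w y * h y) : g ∈ Gset G w ↔ h ∈ Gset G w := by
  simp only [Gset, Set.mem_ofPred_eq, hgh, hg, hh, true_and]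

theorem nrm_const_mul {c : ℝ} (hc : c ≠ 0) : nrm w (fun y => c * p y) = nrm w p := by
  funext y
  simp only [nrm, mul_left_comm (w _) c, integral_const_mul]
  exact mul_div_mul_left _ _ hc

theorem nrm_of_eqOn_const_mul (hw : ∀ y, 0 ≤ w y) {c : ℝ} (hc : c ≠ 0)
    (hgp : Set.EqOn g (fun y => c * p y) {y | 0 < w y}) : nrm w g = nrm w p :=
  (nrm_congr (mul_eq_mul_of_eqOn_pos hw hgp)).trans (nrm_const_mul hc)

theorem mem_Gset_of_eqOn_const_mul (hw : ∀ y, 0 ≤ w y) (hwp : 0 < ∫ y, w y * p y)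
    (hg : g ∈ G) {c : ℝ} (hc : 0 < c) (hgp : Set.EqOn g (fun y => c * p y) {y | 0 < w y}) :
    g ∈ Gset G w := by
  have hwg : (fun y => w y * g y) = fun y => c * (w y * p y) := by
    rw [mul_eq_mul_of_eqOn_pos hw hgp]
    funext y
    ring
  refine ⟨hg, ?_, ?_⟩
  · rw [hwg]
    exact (Integrable.of_integral_ne_zero hwp.ne').const_mul c
  · rw [hwg, integral_const_mul]
    positivity

theorem nrm_eq_nrm_iff_eqOn_const_mul (hw : ∀ y, 0 ≤ w y) (hwp : 0 < ∫ y, w y * p y)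
    (hwh : 0 < ∫ y, w y * h y) :
    nrm w h = nrm w p ↔ ∃ c : ℝ, 0 < c ∧ Set.EqOn h (fun y => c * p y) {y | 0 < w y} := by
  refine ⟨fun hnrm => ?_, fun ⟨c, hc, hhp⟩ => nrm_of_eqOn_const_mul hw hc.ne' hhp⟩
  refine ⟨(∫ y, w y * h y) / ∫ y, w y * p y, by positivity, fun y hy => ?_⟩
  have hy' : h y / (∫ y, w y * h y) = p y / ∫ y, w y * p y := by
    have hwy := congrFun hnrm y
    simp only [nrm, mul_div_assoc] at hwy
    exact mul_left_cancel₀ hy.ne' hwy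
  rw [div_eq_div_iff hwh.ne' hwp.ne'] at hy'
  change h y = _ * p y
  field_simp
  linarith

theorem wExpScore_of_mem_Gset (hwp : 0 < ∫ y, w y * p y) (hh : h ∈ Gset G w) :
    wExpScore S G h p w =
      (((∫ y, w y * p y) * ∫ y, S (nrm w h) y * nrm w p y : ℝ) : EReal) := by
  rw [wExpScore, if_pos hh, ← integral_const_mul]
  congr 2
  funext y
  simp only [nrm]
  field_simp

theorem wScore_eq_of_eqOn (hw : ∀ y, 0 ≤ w y) (hg : g ∈ G) (hh : h ∈ G)
    (hgh : Set.EqOn g h {y | 0 < w y}) (y : Vec d) : wScore S G g y w = wScore S G h y w := by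
  have hwgh := mul_eq_mul_of_eqOn_pos hw hgh
  simp only [wScore, nrm_congr hwgh, mem_Gset_congr hg hh hwgh]

theorem wExpScore_le_of_eqOn_const_mul (hw : ∀ y, 0 ≤ w y) (hwp : 0 < ∫ y, w y * p y)
    (hGwP : ∀ f ∈ Gset G w, nrm w f ∈ P)
    (hproper : ∀ p ∈ P, ∀ q ∈ P, (∫ y, S p y * p y) ≤ ∫ y, S q y * p y) (hg : g ∈ G) {c : ℝ} (hc : 0 < c)
    (hgp : Set.EqOn g (fun y => c * p y) {y | 0 < w y}) :
    wExpScore S G g p w ≤ wExpScore S G h p w := by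
  have hgw := mem_Gset_of_eqOn_const_mul hw hwp hg hc hgp
  by_cases hh : h ∈ Gset G w
  · rw [wExpScore_of_mem_Gset hwp hgw, wExpScore_of_mem_Gset hwp hh, EReal.coe_le_coe_iff]
    have hpw : nrm w p ∈ P := nrm_of_eqOn_const_mul hw hc.ne' hgp ▸ hGwP g hgw
    rw [nrm_of_eqOn_const_mul hw hc.ne' hgp]
    exact mul_le_mul_of_nonneg_left (hproper _ hpw _ (hGwP h hh)) hwp.le
  · simp only [wExpScore, if_neg hh, le_top]

theorem wExpScore_eq_iff_eqOn_const_mul (hw : ∀ y, 0 ≤ w y) (hwp : 0 < ∫ y, w y * p y)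
    (hGwP : ∀ f ∈ Gset G w, nrm w f ∈ P)
    (hstrict : ∀ p ∈ P, ∀ q ∈ P, (∫ y, S q y * p y) = (∫ y, S p y * p y) → q = p)
    (hg : g ∈ G) (hh : h ∈ G) {c : ℝ} (hc : 0 < c)
    (hgp : Set.EqOn g (fun y => c * p y) {y | 0 < w y}) :
    wExpScore S G g p w = wExpScore S G h p w ↔
      ∃ c : ℝ, 0 < c ∧ Set.EqOn h (fun y => c * p y) {y | 0 < w y} := by
  have hgw := mem_Gset_of_eqOn_const_mul hw hwp hg hc hgp
  have hpw : nrm w p ∈ P := nrm_of_eqOn_const_mul hw hc.ne' hgp ▸ hGwP g hgw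
  by_cases hhw : h ∈ Gset G w
  · rw [← nrm_eq_nrm_iff_eqOn_const_mul hw hwp hhw.2.2, wExpScore_of_mem_Gset hwp hgw,
      wExpScore_of_mem_Gset hwp hhw, EReal.coe_eq_coe_iff, nrm_of_eqOn_const_mul hw hc.ne' hgp,
      mul_right_inj' hwp.ne']
    exact ⟨fun hS => hstrict _ hpw _ (hGwP h hhw) hS.symm, fun hnrm => by rw [hnrm]⟩
  · rw [wExpScore_of_mem_Gset hwp hgw, wExpScore, if_neg hhw]
    refine ⟨fun htop => absurd htop (EReal.coe_ne_top _), fun ⟨c', hc', hhp⟩ => ?_⟩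
    exact absurd (mem_Gset_of_eqOn_const_mul hw hwp hh hc' hhp) hhw

end Localization

theorem statement12_general {d : ℕ}
    (W G P : Set (Vec d → ℝ))
    (hW : ∀ w ∈ W, Measurable w ∧ (∀ y, 0 ≤ w y) ∧ ∃ C : ℝ, ∀ y, w y ≤ C)
    (hWP : ∀ w ∈ W, ∀ p ∈ P, 0 < ∫ y : Vec d, w y * p y)
    (hGwP : ∀ w ∈ W, ∀ g ∈ Gset G w, nrm w g ∈ P)
    (S : (Vec d → ℝ) → Vec d → ℝ)
    (hproper : ∀ p ∈ P, ∀ q ∈ P,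
      (∫ y : Vec d, S p y * p y) ≤ ∫ y : Vec d, S q y * p y) :
    -- (i) S̃ is localizing
    (∀ w ∈ W, ∀ g ∈ G, ∀ h ∈ G, Set.EqOn g h {y | 0 < w y} →
      ∀ᵐ y : Vec d, wScore S G g y w = wScore S G h y w) ∧
    -- (ii) S̃ is locally proper with respect to (G, P)
    (∀ w ∈ W, ∀ p ∈ P, ∀ g ∈ G, Set.EqOn g p {y | 0 < w y} →
      ∀ h ∈ G, wExpScore S G g p w ≤ wExpScore S G h p w) ∧
    -- (iii) if S is strictly proper, then S̃ is proportionally locally proper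
    ((∀ p ∈ P, ∀ q ∈ P,
        (∫ y : Vec d, S q y * p y) = (∫ y : Vec d, S p y * p y) → q = p) →
      ∀ w ∈ W, ∀ p ∈ P, ∀ g ∈ G,
        (∃ c : ℝ, 0 < c ∧ Set.EqOn g (fun y => c * p y) {y | 0 < w y}) →
        ∀ h ∈ G,
          wExpScore S G g p w ≤ wExpScore S G h p w ∧
          (wExpScore S G g p w = wExpScore S G h p w ↔
            ∃ c : ℝ, 0 < c ∧ Set.EqOn h (fun y => c * p y) {y | 0 < w y})) := by
  refine ⟨fun w hw g hg h hh hgh => ?_, fun w hw p hp g hg hgp h _ => ?_,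
    fun hstrict w hw p hp g hg ⟨c, hc, hgp⟩ h hh => ⟨?_, ?_⟩⟩
  · exact Eventually.of_forall (wScore_eq_of_eqOn (hW w hw).2.1 hg hh hgh)
  · exact wExpScore_le_of_eqOn_const_mul (hW w hw).2.1 (hWP w hw p hp) (hGwP w hw) hproper hg
      one_pos (fun y hy => (hgp hy).trans (one_mul _).symm)
  · exact wExpScore_le_of_eqOn_const_mul (hW w hw).2.1 (hWP w hw p hp) (hGwP w hw) hproper hg
      hc hgp
  · exact wExpScore_eq_iff_eqOn_const_mul (hW w hw).2.1 (hWP w hw p hp) (hGwP w hw) hstrict hg hh hc hgp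

/-- localization of a proper scoring rule: `S̃` is localizing, locally
proper, and (if `S` is strictly proper) proportionally locally proper. -/
theorem statement12 {d : ℕ}
    (W G P : Set (Vec d → ℝ))
    (hW : ∀ w ∈ W, Measurable w ∧ (∀ y, 0 ≤ w y) ∧ ∃ C : ℝ, ∀ y, w y ≤ C)
    (hG : ∀ g ∈ G, Continuous g ∧ ∀ y, 0 ≤ g y)
    (hP : ∀ p ∈ P, Measurable p ∧ (∀ y, 0 ≤ p y) ∧ (∫ y : Vec d, p y) = 1)
    (hWP : ∀ w ∈ W, ∀ p ∈ P, 0 < ∫ y : Vec d, w y * p y)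
    (hGwP : ∀ w ∈ W, ∀ g ∈ Gset G w, nrm w g ∈ P)
    (S : (Vec d → ℝ) → Vec d → ℝ)
    (hSint : ∀ q ∈ P, ∀ p ∈ P, Integrable (fun y => S q y * p y))
    (hproper : ∀ p ∈ P, ∀ q ∈ P,
      (∫ y : Vec d, S p y * p y) ≤ ∫ y : Vec d, S q y * p y) :
    -- (i) S̃ is localizing
    (∀ w ∈ W, ∀ g ∈ G, ∀ h ∈ G, Set.EqOn g h {y | 0 < w y} →
      ∀ᵐ y : Vec d, wScore S G g y w = wScore S G h y w) ∧
    -- (ii) S̃ is locally proper with respect to (G, P)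
    (∀ w ∈ W, ∀ p ∈ P, ∀ g ∈ G, Set.EqOn g p {y | 0 < w y} →
      ∀ h ∈ G, wExpScore S G g p w ≤ wExpScore S G h p w) ∧
    -- (iii) if S is strictly proper, then S̃ is proportionally locally proper
    ((∀ p ∈ P, ∀ q ∈ P,
        (∫ y : Vec d, S q y * p y) = (∫ y : Vec d, S p y * p y) → q = p) →
      ∀ w ∈ W, ∀ p ∈ P, ∀ g ∈ G,
        (∃ c : ℝ, 0 < c ∧ Set.EqOn g (fun y => c * p y) {y | 0 < w y}) →
        ∀ h ∈ G,
          wExpScore S G g p w ≤ wExpScore S G h p w ∧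
          (wExpScore S G g p w = wExpScore S G h p w ↔
            ∃ c : ℝ, 0 < c ∧ Set.EqOn h (fun y => c * p y) {y | 0 < w y})) :=
  statement12_general W G P hW hWP hGwP S hproper
end
end

section
/- Let W, G, P, G_w be as follows: W a set of bounded nonnegative measurable weight functions on ℝ^d, G a set of nonnegative continuous functions on ℝ^d, P a set of probability densities on ℝ^d with ∫ w p > 0 for all w ∈ W, p ∈ P, and G_w := {g ∈ G : 0 < ∫ w g < ∞}. Let Q : ℝ_{>0} × {0,1} → ℝ ∪ {∞} satisfy, for all β ∈ (0,1], Q(β,β) ≤ Q(α,β) for all α > 0, with equality if and only if α = β, where Q(α,β) := β Q(α,1) + (1−β) Q(α,0). For w ∈ W set m_w := sup_y w(y), and define S_Q(h,y,w) := w(y) Q( m_w^{−1} ∫ w h, 1 ) + (m_w − w(y)) Q( m_w^{−1} ∫ w h, 0 ) if h ∈ G_w, and S_Q(h,y,w) := ∞ otherwise. Then S_Q is a localizing weighted scoring rule that is locally proper with respect to (G,P). Moreover, if S̃ is a localizing weighted scoring rule that is proportionally locally proper with respect to (G,P), then Š := S_Q + S̃ is strictly locally proper with respect to (G,P): it is locally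 proper, and whenever w ∈ W, p ∈ P, g, h ∈ G with g = p on {w > 0} and ∫ Š(g,y,w) p(y) dy = ∫ Š(h,y,w) p(y) dy < ∞, one has h = p on {w > 0}. -/
open MeasureTheory Filter Topology
open scoped EReal Classical

noncomputable section

/-- The (real-valued part of the) score `S_Q(h, y, w)` built from a binary scoring rule
with values `Q1 α = Q(α,1)` and `Q0 α = Q(α,0)`, where `m_w = sup w`:
`S_Q(h,y,w) = w(y) Q(m_w⁻¹ ∫ w h, 1) + (m_w - w(y)) Q(m_w⁻¹ ∫ w h, 0)`. -/
noncomputable def SQpt {d : ℕ} (Q1 Q0 : ℝ → ℝ) (g : Vec d → ℝ) (y : Vec d)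
    (w : Vec d → ℝ) : ℝ :=
  w y * Q1 ((⨆ y' : Vec d, w y')⁻¹ * ∫ y' : Vec d, w y' * g y') +
    ((⨆ y' : Vec d, w y') - w y) * Q0 ((⨆ y' : Vec d, w y')⁻¹ * ∫ y' : Vec d, w y' * g y')

/-- The pointwise weighted score `S_Q(g, y, w)` (equal to `∞` off `G_w`). -/
noncomputable def SQscore {d : ℕ} (Q1 Q0 : ℝ → ℝ) (G : Set (Vec d → ℝ))
    (g : Vec d → ℝ) (y : Vec d) (w : Vec d → ℝ) : EReal :=
  if g ∈ Gset G w then ((SQpt Q1 Q0 g y w : ℝ) : EReal) else ⊤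

/-- The expected score `S_Q(g, p, w)`. -/
noncomputable def SQexp {d : ℕ} (Q1 Q0 : ℝ → ℝ) (G : Set (Vec d → ℝ))
    (g p w : Vec d → ℝ) : EReal :=
  if g ∈ Gset G w then ((∫ y : Vec d, SQpt Q1 Q0 g y w * p y : ℝ) : EReal) else ⊤

/-- The expected score of `Š = S_Q + S̃` for a real-valued weighted scoring rule `S̃`. -/
noncomputable def checkExp {d : ℕ} (Q1 Q0 : ℝ → ℝ) (G : Set (Vec d → ℝ))
    (St : (Vec d → ℝ) → Vec d → (Vec d → ℝ) → ℝ) (g p w : Vec d → ℝ) : EReal :=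
  if g ∈ Gset G w then
    ((∫ y : Vec d, (SQpt Q1 Q0 g y w + St g y w) * p y : ℝ) : EReal) else ⊤

lemma aux_int_p {d : ℕ} {p : Vec d → ℝ} (hp1 : (∫ y : Vec d, p y) = 1) :
    Integrable p := by
  by_contra hcon
  rw [integral_undef hcon] at hp1
  norm_num at hp1

lemma aux_int_wp {d : ℕ} {w p : Vec d → ℝ} {C : ℝ}
    (hwm : Measurable w) (hw0 : ∀ y, 0 ≤ w y) (hC : ∀ y, w y ≤ C)
    (hpm : Measurable p) (hp0 : ∀ y, 0 ≤ p y) (hp : Integrable p) :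
    Integrable (fun y => w y * p y) := by
  refine (hp.const_mul C).mono' ((hwm.mul hpm).aestronglyMeasurable) ?_
  refine Eventually.of_forall fun y => ?_
  rw [Real.norm_eq_abs, abs_of_nonneg (mul_nonneg (hw0 y) (hp0 y))]
  exact mul_le_mul_of_nonneg_right (hC y) (hp0 y)

lemma aux_lin_int {d : ℕ} {w p : Vec d → ℝ}
    (hwp : Integrable (fun y => w y * p y)) (hp : Integrable p) (a b m : ℝ) :
    ∫ y : Vec d, (w y * a + (m - w y) * b) * p y =
      (∫ y : Vec d, w y * p y) * a + (m * (∫ y : Vec d, p y) - ∫ y : Vec d, w y * p y) * b := by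
  have e : ∀ y, (w y * a + (m - w y) * b) * p y
      = (a - b) * (w y * p y) + (m * b) * p y := fun y => by ring
  simp_rw [e]
  rw [integral_add (hwp.const_mul _) (hp.const_mul _), integral_const_mul, integral_const_mul]
  ring

lemma aux_lin_integrable {d : ℕ} {w p : Vec d → ℝ}
    (hwp : Integrable (fun y => w y * p y)) (hp : Integrable p) (a b m : ℝ) :
    Integrable (fun y => (w y * a + (m - w y) * b) * p y) := by
  have e : ∀ y, (w y * a + (m - w y) * b) * p y
      = (a - b) * (w y * p y) + (m * b) * p y := fun y => by ring
  simp_rw [e]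
  exact (hwp.const_mul _).add (hp.const_mul _)

/-- `S_Q` is a localizing, locally proper weighted scoring rule, and
adding it to a proportionally locally proper rule yields a strictly locally proper
rule. -/
theorem statement13 {d : ℕ}
    (W G P : Set (Vec d → ℝ))
    (hW : ∀ w ∈ W, Measurable w ∧ (∀ y, 0 ≤ w y) ∧ ∃ C : ℝ, ∀ y, w y ≤ C)
    (hG : ∀ g ∈ G, Continuous g ∧ ∀ y, 0 ≤ g y)
    (hP : ∀ p ∈ P, Measurable p ∧ (∀ y, 0 ≤ p y) ∧ (∫ y : Vec d, p y) = 1)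
    (hWP : ∀ w ∈ W, ∀ p ∈ P, 0 < ∫ y : Vec d, w y * p y)
    (Q1 Q0 : ℝ → ℝ)
    (hQ : ∀ β : ℝ, 0 < β → β ≤ 1 → ∀ α : ℝ, 0 < α →
      (β * Q1 β + (1 - β) * Q0 β ≤ β * Q1 α + (1 - β) * Q0 α) ∧
      (β * Q1 α + (1 - β) * Q0 α = β * Q1 β + (1 - β) * Q0 β → α = β)) :
    -- S_Q is localizing
    (∀ w ∈ W, ∀ g ∈ G, ∀ h ∈ G, Set.EqOn g h {y | 0 < w y} →
      ∀ᵐ y : Vec d, SQscore Q1 Q0 G g y w = SQscore Q1 Q0 G h y w) ∧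
    -- S_Q is locally proper with respect to (G, P)
    (∀ w ∈ W, ∀ p ∈ P, ∀ g ∈ G, Set.EqOn g p {y | 0 < w y} →
      ∀ h ∈ G, SQexp Q1 Q0 G g p w ≤ SQexp Q1 Q0 G h p w) ∧
    -- adding S_Q to a proportionally locally proper S̃ gives a strictly locally
    -- proper rule Š = S_Q + S̃
    (∀ St : (Vec d → ℝ) → Vec d → (Vec d → ℝ) → ℝ,
      (∀ w ∈ W, ∀ g ∈ G, ∀ p ∈ P, Integrable (fun y => St g y w * p y)) →
      -- S̃ is localizing
      (∀ w ∈ W, ∀ g ∈ G, ∀ h ∈ G, Set.EqOn g h {y | 0 < w y} →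
        ∀ᵐ y : Vec d, St g y w = St h y w) →
      -- S̃ is proportionally locally proper
      (∀ w ∈ W, ∀ p ∈ P, ∀ g ∈ G,
        (∃ c : ℝ, 0 < c ∧ Set.EqOn g (fun y => c * p y) {y | 0 < w y}) →
        ∀ h ∈ G,
          (∫ y : Vec d, St g y w * p y) ≤ (∫ y : Vec d, St h y w * p y) ∧
          ((∫ y : Vec d, St g y w * p y) = (∫ y : Vec d, St h y w * p y) ↔
            ∃ c : ℝ, 0 < c ∧ Set.EqOn h (fun y => c * p y) {y | 0 < w y})) →
      -- then Š is locally proper ...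
      (∀ w ∈ W, ∀ p ∈ P, ∀ g ∈ G, Set.EqOn g p {y | 0 < w y} →
        ∀ h ∈ G, checkExp Q1 Q0 G St g p w ≤ checkExp Q1 Q0 G St h p w) ∧
      -- ... and strictly locally proper
      (∀ w ∈ W, ∀ p ∈ P, ∀ g ∈ G, Set.EqOn g p {y | 0 < w y} →
        ∀ h ∈ G, checkExp Q1 Q0 G St g p w = checkExp Q1 Q0 G St h p w →
          checkExp Q1 Q0 G St h p w ≠ ⊤ →
          Set.EqOn h p {y | 0 < w y})) := by
  have hwgwp : ∀ (w g p : Vec d → ℝ), (∀ y, 0 ≤ w y) →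
      Set.EqOn g p {y | 0 < w y} → (fun y => w y * g y) = fun y => w y * p y := by
    intro w g p hw0 hEq
    funext y
    rcases (hw0 y).lt_or_eq with hy | hy
    · rw [hEq hy]
    · rw [← hy]; simp
  have localizing : ∀ w ∈ W, ∀ g ∈ G, ∀ h ∈ G, Set.EqOn g h {y | 0 < w y} →
      ∀ᵐ y : Vec d, SQscore Q1 Q0 G g y w = SQscore Q1 Q0 G h y w := by
    intro w hw g hg h hh hEq
    have hfun := hwgwp w g h (hW w hw).2.1 hEq
    have hmem : g ∈ Gset G w ↔ h ∈ Gset G w := by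
      simp only [Gset, Set.mem_setOf_eq, hfun, hg, hh, true_and]
    have hpt : ∀ y, SQpt Q1 Q0 g y w = SQpt Q1 Q0 h y w := by
      intro y; simp only [SQpt, hfun]
    refine Eventually.of_forall fun y => ?_
    by_cases hc : g ∈ Gset G w
    · simp only [SQscore, if_pos hc, if_pos (hmem.mp hc), hpt]
    · simp only [SQscore, if_neg hc, if_neg (fun h' => hc (hmem.mpr h'))]
  have core : ∀ w ∈ W, ∀ p ∈ P, ∀ g ∈ G, Set.EqOn g p {y | 0 < w y} →
      g ∈ Gset G w ∧
      (∀ k : Vec d → ℝ, Integrable (fun y => SQpt Q1 Q0 k y w * p y)) ∧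
      ∀ h ∈ Gset G w,
        (∫ y : Vec d, SQpt Q1 Q0 g y w * p y) ≤ (∫ y : Vec d, SQpt Q1 Q0 h y w * p y) ∧
        ((∫ y : Vec d, SQpt Q1 Q0 g y w * p y) = (∫ y : Vec d, SQpt Q1 Q0 h y w * p y) →
          (∫ y : Vec d, w y * h y) = ∫ y : Vec d, w y * p y) := by
    intro w hw p hp g hg hEq
    obtain ⟨hwm, hw0, C, hC⟩ := hW w hw
    obtain ⟨hpm, hp0, hp1⟩ := hP p hp
    have hpi : Integrable p := aux_int_p hp1
    have hwp : Integrable (fun y => w y * p y) := aux_int_wp hwm hw0 hC hpm hp0 hpi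
    have hfun := hwgwp w g p hw0 hEq
    have hI : 0 < ∫ y : Vec d, w y * p y := hWP w hw p hp
    set m := ⨆ y' : Vec d, w y' with hm
    have hbdd : BddAbove (Set.range w) := ⟨C, by rintro _ ⟨y, rfl⟩; exact hC y⟩
    have hwm' : ∀ y, w y ≤ m := fun y => le_ciSup hbdd y
    have hmpos : 0 < m := by
      by_contra hcon
      push_neg at hcon
      have hz : ∀ y, w y = 0 := fun y => le_antisymm ((hwm' y).trans hcon) (hw0 y)
      simp [hz] at hI
    have hIm : (∫ y : Vec d, w y * p y) ≤ m := by
      have h1 : (∫ y : Vec d, w y * p y) ≤ ∫ y : Vec d, m * p y :=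
        integral_mono hwp (hpi.const_mul m) fun y => mul_le_mul_of_nonneg_right (hwm' y) (hp0 y)
      rwa [integral_const_mul, hp1, mul_one] at h1
    have hgG : g ∈ Gset G w := ⟨hg, by rw [hfun]; exact ⟨hwp, hI⟩⟩
    have hβpos : 0 < m⁻¹ * ∫ y : Vec d, w y * p y := mul_pos (inv_pos.mpr hmpos) hI
    have hβ1 : m⁻¹ * (∫ y : Vec d, w y * p y) ≤ 1 := by
      calc m⁻¹ * (∫ y : Vec d, w y * p y) ≤ m⁻¹ * m :=
            mul_le_mul_of_nonneg_left hIm (le_of_lt (inv_pos.mpr hmpos))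
        _ = 1 := inv_mul_cancel₀ hmpos.ne'
    have hval : ∀ k : Vec d → ℝ,
        (∫ y : Vec d, SQpt Q1 Q0 k y w * p y)
          = m * ((m⁻¹ * ∫ y : Vec d, w y * p y) * Q1 (m⁻¹ * ∫ y' : Vec d, w y' * k y')
            + (1 - m⁻¹ * ∫ y : Vec d, w y * p y) * Q0 (m⁻¹ * ∫ y' : Vec d, w y' * k y')) := by
      intro k
      simp only [SQpt]
      rw [← hm, aux_lin_int hwp hpi, hp1]
      field_simp
    have hvalInt : ∀ k : Vec d → ℝ, Integrable (fun y => SQpt Q1 Q0 k y w * p y) := by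
      intro k
      simp only [SQpt]
      exact aux_lin_integrable hwp hpi _ _ _
    refine ⟨hgG, hvalInt, fun h hhG => ?_⟩
    obtain ⟨hhG', hwh, hJ⟩ := hhG
    have hαpos : 0 < m⁻¹ * ∫ y' : Vec d, w y' * h y' := mul_pos (inv_pos.mpr hmpos) hJ
    have hQ' := hQ _ hβpos hβ1 _ hαpos
    have hvg := hval g
    rw [hfun] at hvg
    have hvh := hval h
    constructor
    · rw [hvg, hvh]
      exact mul_le_mul_of_nonneg_left hQ'.1 hmpos.le
    · intro heq
      rw [hvg, hvh] at heq
      have hab := hQ'.2 (mul_left_cancel₀ hmpos.ne' heq.symm)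
      exact mul_left_cancel₀ (inv_ne_zero hmpos.ne') hab
  have proper : ∀ w ∈ W, ∀ p ∈ P, ∀ g ∈ G, Set.EqOn g p {y | 0 < w y} →
      ∀ h ∈ G, SQexp Q1 Q0 G g p w ≤ SQexp Q1 Q0 G h p w := by
    intro w hw p hp g hg hEq h hh
    obtain ⟨hgG, hint, hcore⟩ := core w hw p hp g hg hEq
    by_cases hc : h ∈ Gset G w
    · simp only [SQexp, if_pos hgG, if_pos hc]
      exact_mod_cast (hcore h hc).1
    · simp only [SQexp, if_pos hgG, if_neg hc]
      exact le_top
  refine ⟨localizing, proper, ?_⟩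
  intro St hStInt hStLoc hStProp
  constructor
  · intro w hw p hp g hg hEq h hh
    obtain ⟨hgG, hint, hcore⟩ := core w hw p hp g hg hEq
    by_cases hc : h ∈ Gset G w
    · simp only [checkExp, if_pos hgG, if_pos hc]
      have e1 : ∀ k : Vec d → ℝ, k ∈ G →
          (∫ y : Vec d, (SQpt Q1 Q0 k y w + St k y w) * p y)
            = (∫ y : Vec d, SQpt Q1 Q0 k y w * p y) + ∫ y : Vec d, St k y w * p y := by
        intro k hk
        simp_rw [add_mul]
        exact integral_add (hint k) (hStInt w hw k hk p hp)
      rw [EReal.coe_le_coe_iff, e1 g hg, e1 h hh]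
      have hSt := hStProp w hw p hp g hg ⟨1, one_pos, fun y hy => by simp [hEq hy]⟩ h hh
      exact add_le_add (hcore h hc).1 hSt.1
    · simp only [checkExp, if_neg hc]
      exact le_top
  · intro w hw p hp g hg hEq h hh heq hne
    have hc : h ∈ Gset G w := by
      by_contra hc
      exact hne (by simp [checkExp, if_neg hc])
    obtain ⟨hgG, hint, hcore⟩ := core w hw p hp g hg hEq
    simp only [checkExp, if_pos hgG, if_pos hc] at heq
    rw [EReal.coe_eq_coe_iff] at heq
    have e1 : ∀ k : Vec d → ℝ, k ∈ G →
        (∫ y : Vec d, (SQpt Q1 Q0 k y w + St k y w) * p y)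
          = (∫ y : Vec d, SQpt Q1 Q0 k y w * p y) + ∫ y : Vec d, St k y w * p y := by
      intro k hk
      simp_rw [add_mul]
      exact integral_add (hint k) (hStInt w hw k hk p hp)
    rw [e1 g hg, e1 h hh] at heq
    have hSQle := (hcore h hc).1
    have hSt := hStProp w hw p hp g hg ⟨1, one_pos, fun y hy => by simp [hEq hy]⟩ h hh
    have hSQeq : (∫ y : Vec d, SQpt Q1 Q0 g y w * p y)
        = ∫ y : Vec d, SQpt Q1 Q0 h y w * p y := by linarith [hSt.1]
    have hSteq : (∫ y : Vec d, St g y w * p y) = ∫ y : Vec d, St h y w * p y := by linarith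
    obtain ⟨c, hcpos, hcEq⟩ := hSt.2.mp hSteq
    have hJ : (∫ y : Vec d, w y * h y) = ∫ y : Vec d, w y * p y := (hcore h hc).2 hSQeq
    have hwh : (fun y => w y * h y) = fun y => c * (w y * p y) := by
      funext y
      rcases ((hW w hw).2.1 y).lt_or_eq with hy | hy
      · rw [hcEq hy]; ring
      · rw [← hy]; ring
    have hc1 : c = 1 := by
      have h2 : (∫ y : Vec d, w y * h y) = c * ∫ y : Vec d, w y * p y := by
        rw [hwh, integral_const_mul]
      have hI := hWP w hw p hp
      have : c * (∫ y : Vec d, w y * p y) = 1 * ∫ y : Vec d, w y * p y := by linarith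
      exact mul_right_cancel₀ hI.ne' this
    intro y hy
    have := hcEq hy
    simp only [hc1, one_mul] at this
    exact this
end
end

section
/- Let Y and Z be random vectors in ℝ^d with E(‖Y‖²) < ∞ and E(‖Z‖²) < ∞. Then E( ‖Y+Z‖² min{‖Y+Z‖, 1} ) ≤ 8 E( ‖Y‖² min{‖Y‖, 1} ) + 8 E( ‖Z‖² min{‖Z‖, 1} ). Moreover, with μ := EY, E( ‖Y−μ‖² min{‖Y−μ‖, 1} ) ≤ 16 E( ‖Y‖² min{‖Y‖, 1} ). -/
open MeasureTheory Filter Topology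
open scoped ProbabilityTheory

noncomputable section

/-!
Write `g(x) = x² min(x, 1) = min(x³, x²)` for `x ≥ 0`. Splitting according to whether `a, b ≤ 1`,
the power mean inequality `(a + b)³ ≤ 4(a³ + b³)` and `(a + b)² ≤ 4 max(a, b)²` give
`g(a + b) ≤ 4 g(a) + 4 g(b)`; with the triangle inequality this yields the first bound with
constant `4`.

`g` is not convex (its slope drops from `3` to `2` at `1`), but `h(x) = x³/(1 + x)` is, and
`h ≤ g ≤ 2h`. Jensen's inequality for `h`, through the tangent line of `h` at `E‖Y‖`, gives
`g(‖EY‖) ≤ g(E‖Y‖) ≤ 2 E g(‖Y‖)`, so the second bound holds with constant `4 + 4 · 2 = 12`.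
-/

def sqMulMinOne (x : ℝ) : ℝ := x ^ 2 * min x 1

lemma sqMulMinOne_nonneg {x : ℝ} (hx : 0 ≤ x) : 0 ≤ sqMulMinOne x :=
  mul_nonneg (sq_nonneg x) (le_min hx zero_le_one)

lemma sqMulMinOne_le_sq (x : ℝ) : sqMulMinOne x ≤ x ^ 2 :=
  mul_le_of_le_one_right (sq_nonneg x) (min_le_right _ _)

lemma sqMulMinOne_le_cube (x : ℝ) : sqMulMinOne x ≤ x ^ 3 := by
  rw [sqMulMinOne, pow_succ]
  exact mul_le_mul_of_nonneg_left (min_le_left _ _) (sq_nonneg x)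

lemma sqMulMinOne_of_le_one {x : ℝ} (hx : x ≤ 1) : sqMulMinOne x = x ^ 3 := by
  rw [sqMulMinOne, min_eq_left hx, pow_succ x 2]

lemma sqMulMinOne_of_one_le {x : ℝ} (hx : 1 ≤ x) : sqMulMinOne x = x ^ 2 := by
  rw [sqMulMinOne, min_eq_right hx, mul_one]

lemma sqMulMinOne_mono {a b : ℝ} (ha : 0 ≤ a) (hab : a ≤ b) : sqMulMinOne a ≤ sqMulMinOne b :=
  mul_le_mul (pow_le_pow_left₀ ha hab 2) (min_le_min hab le_rfl) (le_min ha zero_le_one)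
    (sq_nonneg b)

lemma continuous_sqMulMinOne : Continuous sqMulMinOne := by
  unfold sqMulMinOne
  fun_prop

lemma le_one_add_sqMulMinOne {x : ℝ} (hx : 0 ≤ x) : x ≤ 1 + sqMulMinOne x := by
  rcases le_total x 1 with h | h
  · linarith [sqMulMinOne_nonneg hx]
  · rw [sqMulMinOne_of_one_le h]
    nlinarith

lemma sqMulMinOne_add_le {a b : ℝ} (ha : 0 ≤ a) (hb : 0 ≤ b) :
    sqMulMinOne (a + b) ≤ 4 * sqMulMinOne a + 4 * sqMulMinOne b := by
  have hga := sqMulMinOne_nonneg ha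
  have hgb := sqMulMinOne_nonneg hb
  have hsq := sqMulMinOne_le_sq (a + b)
  rcases le_total a 1 with ha1 | ha1 <;> rcases le_total b 1 with hb1 | hb1
  · rw [sqMulMinOne_of_le_one ha1, sqMulMinOne_of_le_one hb1]
    nlinarith [sqMulMinOne_le_cube (a + b), mul_nonneg (add_nonneg ha hb) (sq_nonneg (a - b))]
  · rw [sqMulMinOne_of_one_le hb1]
    nlinarith
  · rw [sqMulMinOne_of_one_le ha1]
    nlinarith
  · rw [sqMulMinOne_of_one_le ha1, sqMulMinOne_of_one_le hb1]
    nlinarith [sq_nonneg (a - b)]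

lemma cube_div_one_add_le_sqMulMinOne {x : ℝ} (hx : 0 ≤ x) :
    x ^ 3 / (1 + x) ≤ sqMulMinOne x := by
  rw [div_le_iff₀ (by positivity)]
  rcases le_total x 1 with h | h
  · rw [sqMulMinOne_of_le_one h]
    nlinarith [pow_nonneg hx 3]
  · rw [sqMulMinOne_of_one_le h]
    nlinarith [sq_nonneg x]

lemma sqMulMinOne_le_two_mul_cube_div_one_add {x : ℝ} (hx : 0 ≤ x) :
    sqMulMinOne x ≤ 2 * (x ^ 3 / (1 + x)) := by
  rw [mul_div_assoc', le_div_iff₀ (by positivity)]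
  rcases le_total x 1 with h | h
  · rw [sqMulMinOne_of_le_one h]
    nlinarith [pow_nonneg hx 3]
  · rw [sqMulMinOne_of_one_le h]
    nlinarith [sq_nonneg x]

/-- The slope `(2t³ + 3t²)/(1 + t)²` is the derivative of `x ↦ x³/(1 + x)` at `t`. -/
lemma tangent_le_cube_div_one_add {t x : ℝ} (ht : 0 ≤ t) (hx : 0 ≤ x) :
    t ^ 3 / (1 + t) + (2 * t ^ 3 + 3 * t ^ 2) / (1 + t) ^ 2 * (x - t) ≤ x ^ 3 / (1 + x) := by
  have hx1 : 0 < 1 + x := by positivity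
  have ht1 : 0 < 1 + t := by positivity
  have gap : x ^ 3 / (1 + x) - (t ^ 3 / (1 + t) + (2 * t ^ 3 + 3 * t ^ 2) / (1 + t) ^ 2 * (x - t))
      = (x - t) ^ 2 * ((1 + t) ^ 2 * x + t ^ 2 + 2 * t) / ((1 + x) * (1 + t) ^ 2) := by
    field_simp
    ring
  rw [← sub_nonneg, gap]
  positivity

lemma sqMulMinOne_integral_le {Ω : Type*} [MeasurableSpace Ω] {μ : Measure Ω}
    [IsProbabilityMeasure μ] {X : Ω → ℝ} (hX0 : ∀ᵐ ω ∂μ, 0 ≤ X ω) (hXi : Integrable X μ)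
    (hgX : Integrable (fun ω => sqMulMinOne (X ω)) μ) :
    sqMulMinOne (∫ ω, X ω ∂μ) ≤ 2 * ∫ ω, sqMulMinOne (X ω) ∂μ := by
  set t := ∫ ω, X ω ∂μ
  have ht : 0 ≤ t := integral_nonneg_of_ae hX0
  set α := (2 * t ^ 3 + 3 * t ^ 2) / (1 + t) ^ 2
  have hslope : Integrable (fun ω => α * (X ω - t)) μ :=
    (hXi.sub (integrable_const t)).const_mul α
  have mean_tangent : ∫ ω, (t ^ 3 / (1 + t) + α * (X ω - t)) ∂μ = t ^ 3 / (1 + t) := by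
    rw [integral_add (integrable_const _) hslope, integral_const_mul,
      integral_sub hXi (integrable_const t)]
    simp [t]
  have jensen : t ^ 3 / (1 + t) ≤ ∫ ω, sqMulMinOne (X ω) ∂μ := by
    rw [← mean_tangent]
    exact integral_mono_ae ((integrable_const _).add hslope) hgX (hX0.mono fun ω hω =>
      (tangent_le_cube_div_one_add ht hω).trans (cube_div_one_add_le_sqMulMinOne hω))
  calc sqMulMinOne t ≤ 2 * (t ^ 3 / (1 + t)) := sqMulMinOne_le_two_mul_cube_div_one_add ht
    _ ≤ 2 * ∫ ω, sqMulMinOne (X ω) ∂μ := by gcongr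

section NormedAddCommGroup

variable {Ω E : Type*} [MeasurableSpace Ω] {μ : Measure Ω} [NormedAddCommGroup E] {Y Z : Ω → E}

lemma sqMulMinOne_norm_add_le (y z : E) :
    sqMulMinOne ‖y + z‖ ≤ 4 * sqMulMinOne ‖y‖ + 4 * sqMulMinOne ‖z‖ :=
  (sqMulMinOne_mono (norm_nonneg _) (norm_add_le y z)).trans
    (sqMulMinOne_add_le (norm_nonneg y) (norm_nonneg z))

lemma integrable_sqMulMinOne_norm (hY : AEStronglyMeasurable Y μ)
    (hY2 : Integrable (fun ω => ‖Y ω‖ ^ 2) μ) : Integrable (fun ω => sqMulMinOne ‖Y ω‖) μ :=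
  hY2.mono' (continuous_sqMulMinOne.comp_aestronglyMeasurable hY.norm) <| ae_of_all _ fun ω => by
    rw [Real.norm_of_nonneg (sqMulMinOne_nonneg (norm_nonneg _))]
    exact sqMulMinOne_le_sq _

lemma integrable_of_sqMulMinOne_norm [IsFiniteMeasure μ] (hY : AEStronglyMeasurable Y μ)
    (hgY : Integrable (fun ω => sqMulMinOne ‖Y ω‖) μ) : Integrable Y μ :=
  ((integrable_const 1).add hgY).mono' hY <|
    ae_of_all _ fun _ => le_one_add_sqMulMinOne (norm_nonneg _)

lemma integral_sqMulMinOne_norm_add_le (hgY : Integrable (fun ω => sqMulMinOne ‖Y ω‖) μ)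
    (hgZ : Integrable (fun ω => sqMulMinOne ‖Z ω‖) μ) :
    ∫ ω, sqMulMinOne ‖Y ω + Z ω‖ ∂μ ≤
      4 * ∫ ω, sqMulMinOne ‖Y ω‖ ∂μ + 4 * ∫ ω, sqMulMinOne ‖Z ω‖ ∂μ := by
  rw [← integral_const_mul, ← integral_const_mul,
    ← integral_add (hgY.const_mul 4) (hgZ.const_mul 4)]
  exact integral_mono_of_nonneg (ae_of_all _ fun _ => sqMulMinOne_nonneg (norm_nonneg _))
    ((hgY.const_mul 4).add (hgZ.const_mul 4)) (ae_of_all _ fun ω => sqMulMinOne_norm_add_le _ _)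

lemma integral_sqMulMinOne_norm_sub_integral_le [NormedSpace ℝ E] [IsProbabilityMeasure μ]
    (hY : AEStronglyMeasurable Y μ) (hgY : Integrable (fun ω => sqMulMinOne ‖Y ω‖) μ) :
    ∫ ω, sqMulMinOne ‖Y ω - ∫ ω', Y ω' ∂μ‖ ∂μ ≤ 12 * ∫ ω, sqMulMinOne ‖Y ω‖ ∂μ := by
  set m := ∫ ω', Y ω' ∂μ
  have hm : sqMulMinOne ‖m‖ ≤ 2 * ∫ ω, sqMulMinOne ‖Y ω‖ ∂μ :=
    (sqMulMinOne_mono (norm_nonneg _) (norm_integral_le_integral_norm Y)).trans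
      (sqMulMinOne_integral_le (ae_of_all _ fun _ => norm_nonneg _)
        (integrable_of_sqMulMinOne_norm hY hgY).norm hgY)
  have hbound : Integrable (fun ω => 4 * sqMulMinOne ‖Y ω‖ + 4 * sqMulMinOne ‖m‖) μ :=
    (hgY.const_mul 4).add (integrable_const _)
  calc ∫ ω, sqMulMinOne ‖Y ω - m‖ ∂μ
      ≤ ∫ ω, (4 * sqMulMinOne ‖Y ω‖ + 4 * sqMulMinOne ‖m‖) ∂μ :=
        integral_mono_of_nonneg (ae_of_all _ fun _ => sqMulMinOne_nonneg (norm_nonneg _)) hbound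
          (ae_of_all _ fun ω => by simpa [sub_eq_add_neg] using sqMulMinOne_norm_add_le (Y ω) (-m))
    _ = 4 * ∫ ω, sqMulMinOne ‖Y ω‖ ∂μ + 4 * sqMulMinOne ‖m‖ := by
        rw [integral_add (hgY.const_mul 4) (integrable_const _), integral_const_mul,
          integral_const]
        simp
    _ ≤ 12 * ∫ ω, sqMulMinOne ‖Y ω‖ ∂μ := by linarith

end NormedAddCommGroup

lemma euclNorm_eq_norm {d : ℕ} (z : Vec d) :
    euclNorm z = ‖(EuclideanSpace.equiv (Fin d) ℝ).symm z‖ := by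
  simp [euclNorm, EuclideanSpace.norm_eq, Real.norm_eq_abs, sq_abs]

/-- truncated second-moment inequalities:
`E(‖Y+Z‖² min{‖Y+Z‖,1}) ≤ 8 E(‖Y‖² min{‖Y‖,1}) + 8 E(‖Z‖² min{‖Z‖,1})` and
`E(‖Y-EY‖² min{‖Y-EY‖,1}) ≤ 16 E(‖Y‖² min{‖Y‖,1})`. -/
theorem statement15 {d : ℕ}
    {Ω : Type*} [MeasureSpace Ω] [IsProbabilityMeasure (ℙ : Measure Ω)]
    (Y Z : Ω → Vec d) (hY : Measurable Y) (hZ : Measurable Z)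
    (hY2 : Integrable (fun ω => euclNorm (Y ω) ^ 2))
    (hZ2 : Integrable (fun ω => euclNorm (Z ω) ^ 2)) :
    ((∫ ω, euclNorm (Y ω + Z ω) ^ 2 * min (euclNorm (Y ω + Z ω)) 1) ≤
      8 * (∫ ω, euclNorm (Y ω) ^ 2 * min (euclNorm (Y ω)) 1) +
        8 * ∫ ω, euclNorm (Z ω) ^ 2 * min (euclNorm (Z ω)) 1) ∧
    ((∫ ω, euclNorm (Y ω - ∫ ω', Y ω') ^ 2 * min (euclNorm (Y ω - ∫ ω', Y ω')) 1) ≤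
      16 * ∫ ω, euclNorm (Y ω) ^ 2 * min (euclNorm (Y ω)) 1) := by
  simp only [euclNorm_eq_norm, map_add, map_sub,
    ← (EuclideanSpace.equiv (Fin d) ℝ).symm.integral_comp_comm] at hY2 hZ2 ⊢
  set e := (EuclideanSpace.equiv (Fin d) ℝ).symm
  have he : ∀ {V : Ω → Vec d}, Measurable V → AEStronglyMeasurable (fun ω => e (V ω)) :=
    fun hV => e.continuous.comp_aestronglyMeasurable hV.aestronglyMeasurable
  have hgY := integrable_sqMulMinOne_norm (he hY) hY2
  have hgZ := integrable_sqMulMinOne_norm (he hZ) hZ2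
  have hsum := integral_sqMulMinOne_norm_add_le hgY hgZ
  have hcentered := integral_sqMulMinOne_norm_sub_integral_le (he hY) hgY
  have hY0 : 0 ≤ ∫ ω, sqMulMinOne ‖e (Y ω)‖ :=
    integral_nonneg fun _ => sqMulMinOne_nonneg (norm_nonneg _)
  have hZ0 : 0 ≤ ∫ ω, sqMulMinOne ‖e (Z ω)‖ :=
    integral_nonneg fun _ => sqMulMinOne_nonneg (norm_nonneg _)
  simp only [sqMulMinOne] at hsum hcentered hY0 hZ0
  exact ⟨by linarith, by linarith⟩

end
end

section
/- Let m ≥ 0 be an integer and let f ∈ L¹(ℝ^d) ∩ C^m(ℝ^d) be such that every partial derivative f^{(α)} with |α| = m is uniformly continuous on ℝ^d. Then for every multi-index γ ∈ ℕ₀^d with |γ| ≤ m, |f^{(γ)}(x)| → 0 as ‖x‖ → ∞. -/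
/-!
Let `g = ∂^γ f` be uniformly continuous and let `φ` be a normalized bump supported in a ball on
which `g` oscillates by less than `ε`. Then `φ ⋆ g` is `ε`-close to `g` everywhere, while
integrating by parts turns it into `∂^γ φ ⋆ f`, which tends to `0` at infinity by dominated
convergence because `f ∈ L¹`. This settles the derivatives of order `m`. A continuous function
tending to `0` at infinity is bounded, so a derivative of order `k - 1` whose gradient consists
of decaying derivatives of order `k` is Lipschitz, hence uniformly continuous, and the same
argument applies to it: downward induction on `|γ|` reaches every `|γ| ≤ m`.
-/

open MeasureTheory Filter Topology

noncomputable section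

/-- Partial derivative in direction `i`. -/
noncomputable def pd {d : ℕ} (i : Fin d) (g : Vec d → ℝ) : Vec d → ℝ :=
  fun x => lineDeriv ℝ g x (Pi.single i 1)

/-- Iterated partial derivative `g^{(γ)}` for a multi-index `γ`. -/
noncomputable def mderiv {d : ℕ} (γ : Fin d → ℕ) (g : Vec d → ℝ) : Vec d → ℝ :=
  (List.finRange d).foldr (fun i F => (pd i)^[γ i] F) g

open scoped Convolution NNReal

section

variable {d : ℕ}

lemma pd_apply_eq_fderiv {g : Vec d → ℝ} {x : Vec d} (hg : DifferentiableAt ℝ g x) (i : Fin d) :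
    pd i g x = fderiv ℝ g x (Pi.single i 1) :=
  hg.lineDeriv_eq_fderiv

lemma pd_eq_fderiv {g : Vec d → ℝ} (hg : Differentiable ℝ g) (i : Fin d) :
    pd i g = fun x => fderiv ℝ g x (Pi.single i 1) :=
  funext fun x => pd_apply_eq_fderiv (hg x) i

lemma contDiff_pd {n : WithTop ℕ∞} {g : Vec d → ℝ} (hg : ContDiff ℝ (n + 1) g) (i : Fin d) :
    ContDiff ℝ n (pd i g) := by
  rw [pd_eq_fderiv (hg.differentiable (by simp))]
  exact (hg.fderiv_right le_rfl).clm_apply contDiff_const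

lemma continuous_pd {g : Vec d → ℝ} (hg : ContDiff ℝ 1 g) (i : Fin d) :
    Continuous (pd i g) :=
  (contDiff_pd (n := 0) (by simpa using hg) i).continuous

lemma pd_pd_apply {g : Vec d → ℝ} (hg : ContDiff ℝ 2 g) (i j : Fin d) (x : Vec d) :
    pd i (pd j g) x = fderiv ℝ (fderiv ℝ g) x (Pi.single i 1) (Pi.single j 1) := by
  have hg' : ContDiff ℝ 1 (fderiv ℝ g) := hg.fderiv_right one_add_one_eq_two.le
  rw [pd_eq_fderiv (hg.differentiable two_ne_zero),
    pd_apply_eq_fderiv ((hg'.differentiable one_ne_zero x).clm_apply (differentiableAt_const _)),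
    fderiv_clm_apply (hg'.differentiable one_ne_zero x) (differentiableAt_const _)]
  simp

lemma pd_comm {g : Vec d → ℝ} (hg : ContDiff ℝ 2 g) (i j : Fin d) :
    pd i (pd j g) = pd j (pd i g) := by
  funext x
  rw [pd_pd_apply hg, pd_pd_apply hg]
  exact hg.contDiffAt.isSymmSndFDerivAt (by simp) _ _

def pdList (L : List (Fin d)) (g : Vec d → ℝ) : Vec d → ℝ := L.foldr pd g

@[simp] lemma pdList_nil (g : Vec d → ℝ) : pdList [] g = g := rfl

@[simp] lemma pdList_cons (i : Fin d) (L : List (Fin d)) (g : Vec d → ℝ) :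
    pdList (i :: L) g = pd i (pdList L g) := rfl

lemma pdList_append (L₁ L₂ : List (Fin d)) (g : Vec d → ℝ) :
    pdList (L₁ ++ L₂) g = pdList L₁ (pdList L₂ g) := by
  simp [pdList, List.foldr_append]

lemma contDiff_pdList {n : ℕ} {g : Vec d → ℝ} (L : List (Fin d))
    (hg : ContDiff ℝ (n + L.length : ℕ) g) : ContDiff ℝ n (pdList L g) := by
  induction L generalizing n with
  | nil => simpa using hg
  | cons i L ih =>
    exact contDiff_pd (ih (n := n + 1) (by simpa [add_assoc, add_comm 1] using hg)) i

lemma pdList_perm {L L' : List (Fin d)} (h : L.Perm L') {g : Vec d → ℝ}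
    (hg : ContDiff ℝ L.length g) : pdList L g = pdList L' g := by
  induction h with
  | nil => rfl
  | cons i _ ih => rw [pdList_cons, pdList_cons, ih (hg.of_le (by simp))]
  | swap i j L =>
    exact pd_comm (contDiff_pdList (n := 2) L (by convert hg using 2; simp; omega)) j i
  | trans h₁ _ ih₁ ih₂ => rw [ih₁ hg, ih₂ (h₁.length_eq ▸ hg)]

def mlist (γ : Fin d → ℕ) : List (Fin d) :=
  (List.finRange d).flatMap fun i => List.replicate (γ i) i

lemma mderiv_eq_pdList (γ : Fin d → ℕ) (g : Vec d → ℝ) : mderiv γ g = pdList (mlist γ) g := by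
  have iterate_pd (i : Fin d) (k : ℕ) (g : Vec d → ℝ) :
      (pd i)^[k] g = pdList (List.replicate k i) g := by
    induction k with
    | zero => rfl
    | succ k ih => rw [Function.iterate_succ_apply', ih, List.replicate_succ, pdList_cons]
  unfold mderiv mlist
  induction List.finRange d with
  | nil => rfl
  | cons i L ih => rw [List.foldr_cons, ih, List.flatMap_cons, pdList_append, iterate_pd]

lemma length_mlist (γ : Fin d → ℕ) : (mlist γ).length = ∑ i, γ i := by
  simp [mlist, List.length_flatMap, Fin.sum_univ_def]

lemma count_mlist (γ : Fin d → ℕ) (j : Fin d) : (mlist γ).count j = γ j := by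
  simp [mlist, List.count_flatMap, List.count_replicate, ← Fin.sum_univ_def, Function.comp_def]

lemma contDiff_mderiv {n : ℕ} {g : Vec d → ℝ} {γ : Fin d → ℕ}
    (hg : ContDiff ℝ (n + ∑ i, γ i : ℕ) g) : ContDiff ℝ n (mderiv γ g) := by
  rw [mderiv_eq_pdList]
  exact contDiff_pdList _ (by rwa [length_mlist])

lemma pd_mderiv {g : Vec d → ℝ} {β : Fin d → ℕ} (hg : ContDiff ℝ (∑ i, β i + 1 : ℕ) g)
    (i : Fin d) : pd i (mderiv β g) = mderiv (β + Pi.single i 1) g := by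
  have hperm : (mlist (β + Pi.single i 1)).Perm (i :: mlist β) := by
    rw [List.perm_iff_count]
    intro j
    rw [count_mlist, List.count_cons, count_mlist]
    by_cases h : j = i
    · simp [h]
    · simp [h, Ne.symm h]
  rw [mderiv_eq_pdList, mderiv_eq_pdList, pdList_perm hperm, pdList_cons]
  rwa [hperm.length_eq, List.length_cons, length_mlist]

lemma hasCompactSupport_comp_const_sub {E : Type*} [NormedAddCommGroup E] {φ : E → ℝ}
    (hφ : HasCompactSupport φ) (x : E) : HasCompactSupport fun t => φ (x - t) :=
  hφ.comp_homeomorph (Homeomorph.subLeft x)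

lemma hasCompactSupport_pd {φ : Vec d → ℝ} (hφ : HasCompactSupport φ)
    (hφd : Differentiable ℝ φ) (i : Fin d) : HasCompactSupport (pd i φ) := by
  rw [pd_eq_fderiv hφd]
  exact hφ.fderiv_apply ℝ _

lemma fderiv_comp_const_sub_apply {φ : Vec d → ℝ} (hφ : Differentiable ℝ φ) (x t : Vec d)
    (i : Fin d) : fderiv ℝ (fun t => φ (x - t)) t (Pi.single i 1) = -pd i φ (x - t) := by
  have h := (hφ (x - t)).hasFDerivAt.comp t ((hasFDerivAt_id t).const_sub x)
  rw [Function.comp_def] at h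
  simp [h.fderiv, pd_apply_eq_fderiv (hφ (x - t))]

/-- Integration by parts against the reflected test function `t ↦ φ (x - t)`: the two sign
changes cancel. -/
lemma convolution_pd {φ g : Vec d → ℝ} (hφ : ContDiff ℝ 1 φ) (hφc : HasCompactSupport φ)
    (hg : ContDiff ℝ 1 g) (i : Fin d) : φ ⋆ pd i g = pd i φ ⋆ g := by
  funext x
  have hφd : Differentiable ℝ φ := hφ.differentiable one_ne_zero
  have hgd : Differentiable ℝ g := hg.differentiable one_ne_zero
  have hψc := hasCompactSupport_comp_const_sub hφc x
  have hψ'c := hasCompactSupport_comp_const_sub (hasCompactSupport_pd hφc hφd i) x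
  have hψcont : Continuous fun t => φ (x - t) := hφ.continuous.comp (continuous_sub_left x)
  have hψ'cont : Continuous fun t => pd i φ (x - t) :=
    (continuous_pd hφ i).comp (continuous_sub_left x)
  have ibp := integral_mul_fderiv_eq_neg_fderiv_mul_of_integrable (μ := volume)
    (f := fun t => φ (x - t)) (g := g) (v := Pi.single i 1) ?_ ?_ ?_
    (fun t _ => (hφd _).comp t (differentiableAt_id.const_sub x)) (fun t _ => hgd t)
  · simp only [convolution_eq_swap, ContinuousLinearMap.lsmul_apply, smul_eq_mul,
      pd_eq_fderiv hgd]
    simpa [fderiv_comp_const_sub_apply hφd x, integral_neg] using ibp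
  · simp only [fderiv_comp_const_sub_apply hφd x, neg_mul]
    exact (hψ'cont.mul hg.continuous).integrable_of_hasCompactSupport hψ'c.mul_right |>.neg
  · have h := (hψcont.mul (continuous_pd hg i)).integrable_of_hasCompactSupport
      (μ := volume) hψc.mul_right
    rw [pd_eq_fderiv hgd] at h
    exact h
  · exact (hψcont.mul hg.continuous).integrable_of_hasCompactSupport hψc.mul_right

lemma convolution_pdList {φ g : Vec d → ℝ} (L : List (Fin d)) (hφ : ContDiff ℝ L.length φ)
    (hφc : HasCompactSupport φ) (hg : ContDiff ℝ L.length g) :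
    φ ⋆ pdList L g = pdList L.reverse φ ⋆ g := by
  induction L generalizing φ with
  | nil => rfl
  | cons i L ih =>
    have hφ1 : ContDiff ℝ (L.length + 1 : ℕ) φ := by simpa using hφ
    rw [pdList_cons, convolution_pd (hφ.of_le (by simp)) hφc
      (contDiff_pdList (n := 1) L (by simpa [add_comm] using hg)),
      ih (contDiff_pd (by exact_mod_cast hφ1) i)
        (hasCompactSupport_pd hφc (hφ.differentiable (by simp)) i) (hg.of_le (by simp)),
      List.reverse_cons, pdList_append, pdList_cons, pdList_nil]

lemma hasCompactSupport_pdList {φ : Vec d → ℝ} (L : List (Fin d)) (hφ : ContDiff ℝ L.length φ)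
    (hφc : HasCompactSupport φ) : HasCompactSupport (pdList L φ) := by
  induction L with
  | nil => exact hφc
  | cons i L ih =>
    exact hasCompactSupport_pd (ih (hφ.of_le (by simp)))
      ((contDiff_pdList (n := 1) L (by simpa [add_comm] using hφ)).differentiable one_ne_zero) i

lemma tendsto_convolution_cocompact {G : Type*} [NormedAddCommGroup G] [ProperSpace G]
    [MeasurableSpace G] [BorelSpace G] {μ : Measure G} [μ.IsAddLeftInvariant] [μ.IsNegInvariant]
    {ψ f : G → ℝ} (hψ : Continuous ψ) (hψc : HasCompactSupport ψ) (hf : Integrable f μ) :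
    Tendsto (ψ ⋆[ContinuousLinearMap.lsmul ℝ ℝ, μ] f) (cocompact G) (𝓝 0) := by
  obtain ⟨C, hC⟩ := hψc.exists_bound_of_continuous hψ
  have hpointwise (t : G) : Tendsto (fun x => ψ (x - t) * f t) (cocompact G) (𝓝 0) := by
    simpa using (hψc.is_zero_at_infty.comp
      (Homeomorph.subRight t).isClosedEmbedding.tendsto_cocompact).mul_const (f t)
  simp_rw [← Metric.cobounded_eq_cocompact, ← comap_norm_atTop] at hpointwise ⊢
  have h := tendsto_integral_filter_of_dominated_convergence (fun t => C * ‖f t‖)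
    (F := fun x t => ψ (x - t) * f t)
    (Eventually.of_forall fun x =>
      ((hψ.comp (continuous_sub_left x)).aestronglyMeasurable).mul hf.aestronglyMeasurable)
    (Eventually.of_forall fun x => Eventually.of_forall fun t => by
      rw [norm_mul]
      exact mul_le_mul_of_nonneg_right (hC _) (norm_nonneg _))
    (hf.norm.const_mul C) (Eventually.of_forall hpointwise)
  rw [integral_zero] at h
  refine h.congr fun x => ?_
  simp [convolution_eq_swap]

lemma tendsto_pdList_cocompact_of_uniformContinuous {f : Vec d → ℝ} (hf : Integrable f)
    (L : List (Fin d)) (hfL : ContDiff ℝ L.length f) (hu : UniformContinuous (pdList L f)) :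
    Tendsto (pdList L f) (cocompact (Vec d)) (𝓝 0) := by
  rw [Metric.tendsto_nhds]
  intro ε hε
  obtain ⟨δ, hδ, hδu⟩ := Metric.uniformContinuous_iff.mp hu (ε / 2) (half_pos hε)
  let b : ContDiffBump (0 : Vec d) := ⟨δ / 2, δ, half_pos hδ, half_lt_self hδ⟩
  have hb : ContDiff ℝ L.length (b.normed volume) := by exact_mod_cast b.contDiff_normed
  have hclose (x : Vec d) : dist ((b.normed volume ⋆ pdList L f) x) (pdList L f x) ≤ ε / 2 :=
    b.dist_normed_convolution_le hu.continuous.aestronglyMeasurable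
      fun y hy => (hδu (Metric.mem_ball.mp hy)).le
  have hdecay : Tendsto (b.normed volume ⋆ pdList L f) (cocompact (Vec d)) (𝓝 0) := by
    rw [convolution_pdList L hb b.hasCompactSupport_normed hfL]
    refine tendsto_convolution_cocompact ?_
      (hasCompactSupport_pdList L.reverse (by simpa using hb) b.hasCompactSupport_normed) hf
    exact (contDiff_pdList (n := 0) L.reverse (by simpa using hb)).continuous
  filter_upwards [Metric.tendsto_nhds.mp hdecay (ε / 2) (half_pos hε)] with x hx
  calc dist (pdList L f x) 0
      ≤ dist (pdList L f x) ((b.normed volume ⋆ pdList L f) x)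
        + dist ((b.normed volume ⋆ pdList L f) x) 0 := dist_triangle _ _ _
    _ < ε := by linarith [hclose x, dist_comm (pdList L f x) ((b.normed volume ⋆ pdList L f) x)]

lemma exists_norm_le_of_tendsto_cocompact {X E : Type*} [TopologicalSpace X]
    [NormedAddCommGroup E] {g : X → E} (hg : Continuous g) (h : Tendsto g (cocompact X) (𝓝 0)) :
    ∃ C, ∀ x, ‖g x‖ ≤ C :=
  (isBounded_iff_forall_norm_le.mp (ZeroAtInftyContinuousMap.isBounded_range ⟨⟨g, hg⟩, h⟩)).imp
    fun _ hC x => hC _ ⟨x, rfl⟩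

lemma lipschitzWith_of_norm_pd_le {g : Vec d → ℝ} (hg : Differentiable ℝ g) {K : ℝ≥0}
    (hK : ∀ i x, ‖pd i g x‖ ≤ K) : LipschitzWith (d * K) g := by
  refine lipschitzWith_of_nnnorm_fderiv_le hg fun x => ?_
  rw [← NNReal.coe_le_coe, coe_nnnorm, NNReal.coe_mul, NNReal.coe_natCast]
  refine ContinuousLinearMap.opNorm_le_bound _ (by positivity) fun v => ?_
  calc ‖fderiv ℝ g x v‖ = ‖∑ i, v i * pd i g x‖ := by
        have hsingle (i : Fin d) : Pi.single i (v i) = v i • (Pi.single i 1 : Vec d) := by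
          rw [← Pi.single_smul', smul_eq_mul, mul_one]
        conv_lhs => rw [← Finset.univ_sum_single v]
        simp [hsingle, pd_apply_eq_fderiv (hg x)]
    _ ≤ ∑ i, ‖v i‖ * ‖pd i g x‖ := (norm_sum_le _ _).trans_eq (by simp [norm_mul])
    _ ≤ ∑ _i : Fin d, ‖v‖ * K := by
        gcongr with i; exacts [norm_le_pi_norm v i, hK i x]
    _ = d * K * ‖v‖ := by simp; ring

lemma uniformContinuous_of_tendsto_pd {g : Vec d → ℝ} (hg : ContDiff ℝ 1 g)
    (h : ∀ i, Tendsto (pd i g) (cocompact (Vec d)) (𝓝 0)) : UniformContinuous g := by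
  obtain ⟨C, hC⟩ := exists_norm_le_of_tendsto_cocompact (g := fun x i => pd i g x)
    (continuous_pi fun i => continuous_pd hg i) (tendsto_pi_nhds.mpr h)
  refine (lipschitzWith_of_norm_pd_le (K := C.toNNReal) (hg.differentiable one_ne_zero)
    fun i x => ?_).uniformContinuous
  exact (norm_le_pi_norm (fun i => pd i g x) i).trans ((hC x).trans (Real.le_coe_toNNReal C))

lemma tendsto_mderiv_cocompact_of_uniformContinuous {f : Vec d → ℝ} (hf : Integrable f)
    {γ : Fin d → ℕ} (hfγ : ContDiff ℝ (∑ i, γ i : ℕ) f) (hu : UniformContinuous (mderiv γ f)) :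
    Tendsto (mderiv γ f) (cocompact (Vec d)) (𝓝 0) := by
  rw [mderiv_eq_pdList] at hu ⊢
  exact tendsto_pdList_cocompact_of_uniformContinuous hf _ (by rwa [length_mlist]) hu

lemma tendsto_mderiv_cocompact {m : ℕ} {f : Vec d → ℝ} (hfint : Integrable f)
    (hf : ContDiff ℝ m f) (hfu : ∀ α : Fin d → ℕ, ∑ i, α i = m → UniformContinuous (mderiv α f))
    (k : ℕ) (γ : Fin d → ℕ) (hγ : ∑ i, γ i + k = m) :
    Tendsto (mderiv γ f) (cocompact (Vec d)) (𝓝 0) := by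
  induction k generalizing γ with
  | zero =>
    rw [add_zero] at hγ
    exact tendsto_mderiv_cocompact_of_uniformContinuous hfint (hγ ▸ hf) (hfu γ hγ)
  | succ k ih =>
    have hfγ : ContDiff ℝ (∑ i, γ i + 1 : ℕ) f := hf.of_le (by exact_mod_cast (by omega))
    refine tendsto_mderiv_cocompact_of_uniformContinuous hfint (hfγ.of_le (by simp)) ?_
    refine uniformContinuous_of_tendsto_pd (contDiff_mderiv (by rwa [add_comm])) fun i => ?_
    rw [pd_mderiv hfγ]
    exact ih _ (by simp [Finset.sum_add_distrib]; omega)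

lemma comap_atTop_le_cocompact {X : Type*} [TopologicalSpace X] {N : X → ℝ}
    (hN : Continuous N) : comap N atTop ≤ cocompact X :=
  (comap_mono atTop_le_cocompact).trans (comap_cocompact_le hN)

end

/-- if `f ∈ L¹(ℝ^d) ∩ C^m(ℝ^d)` and all partial derivatives of order `m`
are uniformly continuous, then `f^{(γ)}(x) → 0` as `‖x‖ → ∞` for every `|γ| ≤ m`. -/
theorem statement18 {d : ℕ} (m : ℕ)
    (f : Vec d → ℝ) (hfint : Integrable f) (hf : ContDiff ℝ (m : ℕ∞) f)
    (hfu : ∀ α : Fin d → ℕ, (∑ i, α i) = m → UniformContinuous (mderiv α f)) :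
    ∀ γ : Fin d → ℕ, (∑ i, γ i) ≤ m →
      Tendsto (mderiv γ f) (Filter.comap euclNorm atTop) (𝓝 0) := by
  intro γ hγ
  obtain ⟨k, hk⟩ := Nat.exists_eq_add_of_le hγ
  have hcont : Continuous (euclNorm : Vec d → ℝ) := by unfold euclNorm; fun_prop
  exact (tendsto_mderiv_cocompact hfint (by exact_mod_cast hf) hfu k γ hk.symm).mono_left
    (comap_atTop_le_cocompact hcont)
end
end
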